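/- arXiv:1212.1968 — 7 statements merged into one kernel-verified Lean document; each statement's English description precedes it below -/
import Mathlib

section
/- Let X be a real Banach space and T : X ⇉ X* a monotone operator whose domain D_T is bounded. Then the following three conditions are equivalent: (i) for every x ∉ cl D_T one has sup{⟨z*, x − z⟩/‖x − z‖ : (z,z*) ∈ G(T)} = ∞; (ii) π₁ dom φ_T ⊆ cl D_T; (iii) cl D_T = cl(co D_T) = cl(π₁ dom φ_T). Moreover, each of them implies (iv): cl D_T is convex. -/
open Set Bornology
open scoped Pointwise

noncomputable section

variable {X : Type*} [NormedAddCommGroup X] [NormedSpace ℝ X]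

/-- The topological dual of `X`. -/
abbrev DualX (X : Type*) [NormedAddCommGroup X] [NormedSpace ℝ X] := X →L[ℝ] ℝ

/-- Domain of a set-valued operator `T : X ⇉ X*`. -/
def OpDom (T : X → Set (DualX X)) : Set X := {x | (T x).Nonempty}

/-- Range of a set-valued operator `T : X ⇉ X*`. -/
def OpRan (T : X → Set (DualX X)) : Set (DualX X) := {p | ∃ x, p ∈ T x}

/-- `T` is a monotone operator. -/
def IsMonotoneOp (T : X → Set (DualX X)) : Prop :=
  ∀ ⦃x x' y y'⦄, x' ∈ T x → y' ∈ T y → 0 ≤ (x' - y') (x - y)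

/-- `T` is a maximal monotone operator: it is monotone and no monotone operator has graph
strictly containing the graph of `T`. -/
def IsMaxMonotone (T : X → Set (DualX X)) : Prop :=
  IsMonotoneOp T ∧
    ∀ S : X → Set (DualX X), IsMonotoneOp S → (∀ x, T x ⊆ S x) → ∀ x, S x ⊆ T x

/-- `L(x, x*, T) = sup {⟨y* − x*, x − y⟩/‖x − y‖ : (y,y*) ∈ G(T), y ≠ x}`, as a value
in `[-∞, ∞]` (the sup of the empty set being `-∞`). -/
def LVal (T : X → Set (DualX X)) (x : X) (x' : DualX X) : EReal :=
  sSup ((fun r : ℝ => (r : EReal)) ''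
    {r | ∃ y y', y' ∈ T y ∧ y ≠ x ∧ r = (y' - x') (x - y) / ‖x - y‖})

/-- The distance from a point `x*` to a set `A ⊆ X*`, as a value in `[-∞,∞]`
(the inf of the empty set being `+∞`). -/
def DistE (x' : DualX X) (A : Set (DualX X)) : EReal :=
  sInf ((fun y' : DualX X => (‖x' - y'‖ : EReal)) '' A)

/-- A maximal monotone operator is regular when `L(x,x*,T) = d(x*, T(x))` everywhere. -/
def IsRegularOp (T : X → Set (DualX X)) : Prop :=
  ∀ x : X, ∀ x' : DualX X, LVal T x x' = DistE x' (T x)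

/-- The regularity property: `L(x, 0, T) < ∞` implies `x ∈ D_T`. -/
def RegularityProperty (T : X → Set (DualX X)) : Prop :=
  ∀ x : X, LVal T x 0 < ⊤ → x ∈ OpDom T

/-- `π₁ dom φ_T`: the projection onto `X` of the set where the Fitzpatrick function of `T`
is finite. -/
def FitzDom1 (T : X → Set (DualX X)) : Set X :=
  {x | ∃ x' : DualX X, BddAbove {r : ℝ | ∃ z z', z' ∈ T z ∧ r = (x' - z') (z - x)}}

/-- `π₂ dom φ_T`: the projection onto `X*` of the set where the Fitzpatrick function of `T`
is finite. -/
def FitzDom2 (T : X → Set (DualX X)) : Set (DualX X) :=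
  {x' | ∃ x : X, BddAbove {r : ℝ | ∃ z z', z' ∈ T z ∧ r = (x' - z') (z - x)}}

/-- The sum of two set-valued operators. -/
def OpSum (T S : X → Set (DualX X)) : X → Set (DualX X) :=
  fun x => {u | ∃ t' ∈ T x, ∃ s' ∈ S x, u = t' + s'}

/-- The convex subdifferential of a real-valued function. -/
def Subdiff (f : X → ℝ) (x : X) : Set (DualX X) :=
  {x' | ∀ y : X, f x + x' (y - x) ≤ f y}

/-- The subdifferential `∂I_C` of the indicator function of `C`. -/
def IndSubdiff (C : Set X) (x : X) : Set (DualX X) :=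
  {x' | x ∈ C ∧ ∀ y ∈ C, x' (y - x) ≤ 0}

/-- A set-valued operator is bounded if it maps bounded sets to bounded sets. -/
def IsBoundedOp (T : X → Set (DualX X)) : Prop :=
  ∀ A : Set X, IsBounded A → IsBounded {p : DualX X | ∃ x ∈ A, p ∈ T x}

/-- Maximal monotone operators of type (FPV). -/
def IsFPV (T : X → Set (DualX X)) : Prop :=
  IsMaxMonotone T ∧
    ∀ U : Set X, IsOpen U → Convex ℝ U → (U ∩ OpDom T).Nonempty →
      ∀ x : X, ∀ x' : DualX X, x ∈ U →
        (∀ z z', z' ∈ T z → z ∈ U → 0 ≤ (x' - z') (x - z)) → x' ∈ T x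

/-- The class `𝒞₀(T)`. -/
def CZero (T : X → Set (DualX X)) : Set (Set X) :=
  {C | IsClosed C ∧ Convex ℝ C ∧ (OpDom T ∩ interior C).Nonempty}

/-- The class `𝒞₁(T)`. -/
def COne (T : X → Set (DualX X)) : Set (Set X) :=
  {C | IsClosed C ∧ Convex ℝ C ∧
    ∃ Y : Submodule ℝ X, IsClosed (Y : Set X) ∧
      (Y : Set X) = ⋃ (l : ℝ) (_ : 0 < l), l • (convexHull ℝ (OpDom T) - C)}

/-- `T` is `𝒞₀`-maximal. -/
def CZeroMaximal (T : X → Set (DualX X)) : Prop :=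
  ∀ C ∈ CZero T, IsMaxMonotone (OpSum T (IndSubdiff C))

/-- `T` is `𝒞₁`-maximal. -/
def COneMaximal (T : X → Set (DualX X)) : Prop :=
  ∀ C ∈ COne T, IsMaxMonotone (OpSum T (IndSubdiff C))

/-- `K_{y,A} = {(1−t)y + ta : t ∈ [0,1], a ∈ A}`. -/
def Kseg (y : X) (A : Set X) : Set X :=
  {p | ∃ t ∈ Icc (0:ℝ) 1, ∃ a ∈ A, p = (1 - t) • y + t • a}

/-- `T` is directionally inf bounded at `x`. -/
def DirInfBdd (T : X → Set (DualX X)) (x : X) : Prop :=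
  ∀ y : X, ∃ ε > (0:ℝ), ∃ M > (0:ℝ),
    ∀ z ∈ Kseg y (Metric.ball x ε) ∩ OpDom T, ∃ z' ∈ T z, z' (z - y) ≤ M * ‖z - y‖

/-- The weak*-closure of a subset of the dual. -/
def WStarClosure (A : Set (DualX X)) : Set (DualX X) :=
  ⇑StrongDual.toWeakDual ⁻¹' closure (⇑StrongDual.toWeakDual '' A)

/-!
Monotonicity puts `D_T` inside `π₁ dom φ_T`, which is convex as the projection of the domain
of a convex function; hence `D_T ⊆ co D_T ⊆ π₁ dom φ_T`, which gives (ii) ⇔ (iii) ⇒ (iv).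
A witness `x*` for `x ∈ π₁ dom φ_T` yields `⟨z*, x − z⟩ ≤ ‖x*‖ ‖x − z‖ + M` on `G(T)`; away from
`cl D_T` this bounds the slopes in (i). Conversely, on a bounded domain bounded slopes make
`x* = 0` such a witness.
-/

section Fitzpatrick

variable {T : X → Set (DualX X)} {x : X}

theorem mem_fitzDom1_iff :
    x ∈ FitzDom1 T ↔ ∃ (x' : DualX X) (M : ℝ), ∀ z z', z' ∈ T z → (x' - z') (z - x) ≤ M := by
  refine exists_congr fun x' => ⟨fun ⟨M, hM⟩ => ⟨M, fun z z' hz' => hM ⟨z, z', hz', rfl⟩⟩, ?_⟩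
  rintro ⟨M, hM⟩
  exact ⟨M, by rintro r ⟨z, z', hz', rfl⟩; exact hM z z' hz'⟩

theorem convex_fitzDom1 (T : X → Set (DualX X)) : Convex ℝ (FitzDom1 T) := by
  intro x hx y hy a b ha hb hab
  obtain ⟨x₁, M₁, h₁⟩ := mem_fitzDom1_iff.1 hx
  obtain ⟨x₂, M₂, h₂⟩ := mem_fitzDom1_iff.1 hy
  obtain rfl : b = 1 - a := by linarith
  set c := a * x₁ x + (1 - a) * x₂ y - (a • x₁ + (1 - a) • x₂) (a • x + (1 - a) • y)
  refine mem_fitzDom1_iff.2 ⟨a • x₁ + (1 - a) • x₂, a * M₁ + (1 - a) * M₂ + c, fun z z' hz' => ?_⟩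
  have hsplit : (a • x₁ + (1 - a) • x₂ - z') (z - (a • x + (1 - a) • y)) =
      a * (x₁ - z') (z - x) + (1 - a) * (x₂ - z') (z - y) + c := by
    simp only [c, sub_apply, add_apply,
      smul_apply, map_sub, map_add, map_smul, smul_eq_mul]
    ring
  rw [hsplit]
  gcongr
  · exact h₁ z z' hz'
  · exact h₂ z z' hz'

theorem opDom_subset_fitzDom1 (hmono : IsMonotoneOp T) : OpDom T ⊆ FitzDom1 T := by
  rintro x ⟨x', hx'⟩
  refine mem_fitzDom1_iff.2 ⟨x', 0, fun z z' hz' => ?_⟩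
  have hflip : (x' - z') (z - x) = -(x' - z') (x - z) := by
    rw [← map_neg, neg_sub]
  linarith [hmono hx' hz']

theorem convexHull_opDom_subset_fitzDom1 (hmono : IsMonotoneOp T) :
    convexHull ℝ (OpDom T) ⊆ FitzDom1 T :=
  convexHull_min (opDom_subset_fitzDom1 hmono) (convex_fitzDom1 T)

theorem bddAbove_slopes_of_mem_fitzDom1 (hx : x ∈ FitzDom1 T) (hxD : x ∉ closure (OpDom T)) :
    BddAbove {r : ℝ | ∃ z z', z' ∈ T z ∧ r = z' (x - z) / ‖x - z‖} := by
  obtain ⟨x', M, hM⟩ := mem_fitzDom1_iff.1 hx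
  obtain ⟨ε, hε, hball⟩ := Metric.isOpen_iff.1 isClosed_closure.isOpen_compl x hxD
  refine ⟨‖x'‖ + |M| / ε, ?_⟩
  rintro r ⟨z, z', hz', rfl⟩
  have hεz : ε ≤ ‖x - z‖ := by
    by_contra! h
    refine hball (by rwa [Metric.mem_ball, dist_comm, dist_eq_norm]) (subset_closure ⟨z', hz'⟩)
  have hpos : 0 < ‖x - z‖ := hε.trans_le hεz
  have hsplit : z' (x - z) = x' (x - z) + (x' - z') (z - x) := by
    simp only [sub_apply, map_sub]
    ring
  have hx' : x' (x - z) ≤ ‖x'‖ * ‖x - z‖ := (le_abs_self _).trans (x'.le_opNorm _)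
  calc z' (x - z) / ‖x - z‖ ≤ (‖x'‖ * ‖x - z‖ + |M|) / ‖x - z‖ := by
        gcongr
        linarith [hM z z' hz', le_abs_self M]
    _ = ‖x'‖ + |M| / ‖x - z‖ := by field_simp
    _ ≤ ‖x'‖ + |M| / ε := by gcongr

theorem mem_fitzDom1_of_bddAbove_slopes (hbdd : IsBounded (OpDom T))
    (hx : BddAbove {r : ℝ | ∃ z z', z' ∈ T z ∧ r = z' (x - z) / ‖x - z‖}) : x ∈ FitzDom1 T := by
  obtain ⟨K, hK⟩ := hx
  obtain ⟨R, hR, hDR⟩ := hbdd.subset_closedBall_lt 0 x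
  refine mem_fitzDom1_iff.2 ⟨0, max K 0 * R, fun z z' hz' => ?_⟩
  have hzR : ‖x - z‖ ≤ R := by
    simpa [dist_comm, dist_eq_norm] using hDR ⟨z', hz'⟩
  have hslope : z' (x - z) ≤ max K 0 * ‖x - z‖ := by
    rcases eq_or_lt_of_le (norm_nonneg (x - z)) with hzero | hpos
    · rw [← hzero, norm_eq_zero.1 hzero.symm, map_zero, mul_zero]
    · have := hK ⟨z, z', hz', rfl⟩
      rw [div_le_iff₀ hpos] at this
      nlinarith [le_max_left K 0]
  have hflip : ((0 : DualX X) - z') (z - x) = z' (x - z) := by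
    rw [zero_sub, neg_apply, ← map_neg, neg_sub]
  rw [hflip]
  exact hslope.trans (mul_le_mul_of_nonneg_left hzR (le_max_right K 0))

end Fitzpatrick

theorem subset_closure_iff_closure_eq_closure {α : Type*} [TopologicalSpace α] {A B C : Set α}
    (hAB : A ⊆ B) (hBC : B ⊆ C) :
    C ⊆ closure A ↔ closure A = closure B ∧ closure A = closure C := by
  refine ⟨fun hCA => ?_, fun ⟨_, hAC⟩ => hAC ▸ subset_closure⟩
  have hC : closure C ⊆ closure A := closure_minimal hCA isClosed_closure
  exact ⟨(closure_mono hAB).antisymm ((closure_mono hBC).trans hC),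
    (closure_mono (hAB.trans hBC)).antisymm hC⟩

theorem statement0_general {X : Type*} [NormedAddCommGroup X] [NormedSpace ℝ X]
    (T : X → Set (DualX X)) (hmono : IsMonotoneOp T)
    (hbdd : IsBounded (OpDom T)) :
    ((∀ x : X, x ∉ closure (OpDom T) →
        ¬ BddAbove {r : ℝ | ∃ z z', z' ∈ T z ∧ r = z' (x - z) / ‖x - z‖}) ↔
      FitzDom1 T ⊆ closure (OpDom T)) ∧
    ((FitzDom1 T ⊆ closure (OpDom T)) ↔
      (closure (OpDom T) = closure (convexHull ℝ (OpDom T)) ∧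
        closure (OpDom T) = closure (FitzDom1 T))) ∧
    ((closure (OpDom T) = closure (convexHull ℝ (OpDom T)) ∧
        closure (OpDom T) = closure (FitzDom1 T)) →
      Convex ℝ (closure (OpDom T))) := by
  refine ⟨⟨fun hi x hx => ?_, fun hii x hxD hx => ?_⟩,
    subset_closure_iff_closure_eq_closure (subset_convexHull ℝ _)
      (convexHull_opDom_subset_fitzDom1 hmono), fun ⟨hco, _⟩ => ?_⟩
  · by_contra hxD
    exact hi x hxD (bddAbove_slopes_of_mem_fitzDom1 hx hxD)
  · exact hxD (hii (mem_fitzDom1_of_bddAbove_slopes hbdd hx))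
  · rw [hco]
    exact (convex_convexHull ℝ _).closure

/-- For a monotone operator with bounded domain, conditions (i),(ii),(iii)
are equivalent and each implies that `cl D_T` is convex. -/
theorem statement0 {X : Type*} [NormedAddCommGroup X] [NormedSpace ℝ X] [CompleteSpace X]
    (T : X → Set (DualX X)) (hmono : IsMonotoneOp T)
    (hbdd : IsBounded (OpDom T)) :
    ((∀ x : X, x ∉ closure (OpDom T) →
        ¬ BddAbove {r : ℝ | ∃ z z', z' ∈ T z ∧ r = z' (x - z) / ‖x - z‖}) ↔
      FitzDom1 T ⊆ closure (OpDom T)) ∧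
    ((FitzDom1 T ⊆ closure (OpDom T)) ↔
      (closure (OpDom T) = closure (convexHull ℝ (OpDom T)) ∧
        closure (OpDom T) = closure (FitzDom1 T))) ∧
    ((closure (OpDom T) = closure (convexHull ℝ (OpDom T)) ∧
        closure (OpDom T) = closure (FitzDom1 T)) →
      Convex ℝ (closure (OpDom T))) :=
  statement0_general T hmono hbdd
end
end

section
/- Let X be a real Banach space and T : X ⇉ X* a maximal monotone operator whose domain D_T is bounded. If cl D_T is convex, then for every x ∉ cl D_T one has sup{⟨z*, x − z⟩/‖x − z‖ : (z,z*) ∈ G(T)} = ∞. -/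
open Set Bornology
open scoped Pointwise

noncomputable section

variable {X : Type*} [NormedAddCommGroup X] [NormedSpace ℝ X]

theorem IsMaxMonotone.mem_of_forall_nonneg {T : X → Set (DualX X)} (hT : IsMaxMonotone T)
    {x : X} {x' : DualX X} (h : ∀ z z', z' ∈ T z → 0 ≤ (x' - z') (x - z)) : x' ∈ T x := by
  let S : X → Set (DualX X) := fun y => T y ∪ {g | y = x ∧ g = x'}
  have hS : IsMonotoneOp S := by
    rintro a a' b b' (ha | ⟨rfl, rfl⟩) (hb | ⟨rfl, rfl⟩)
    · exact hT.1 ha hb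
    · simpa only [← neg_sub b' a', ← neg_sub b a, map_neg, neg_apply, neg_neg] using h a a' ha
    · exact h b b' hb
    · simp
  exact hT.2 S hS (fun _ => subset_union_left) x (Or.inr ⟨rfl, rfl⟩)

theorem exists_apply_sub_le_of_div_norm_le {T : X → Set (DualX X)} {x : X} {M : ℝ}
    (hbdd : IsBounded (OpDom T)) (hx : x ∉ OpDom T)
    (hM : ∀ z z', z' ∈ T z → z' (x - z) / ‖x - z‖ ≤ M) :
    ∃ C, ∀ z z', z' ∈ T z → z' (x - z) ≤ C := by
  obtain ⟨R, hR⟩ := hbdd.subset_closedBall x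
  refine ⟨max M 0 * R, fun z z' hz => ?_⟩
  have hzD : z ∈ OpDom T := ⟨z', hz⟩
  have hpos : 0 < ‖x - z‖ := norm_pos_iff.2 (sub_ne_zero.2 fun h => hx (h ▸ hzD))
  calc z' (x - z) = z' (x - z) / ‖x - z‖ * ‖x - z‖ := (div_mul_cancel₀ _ hpos.ne').symm
    _ ≤ max M 0 * ‖x - z‖ := by gcongr; exact (hM z z' hz).trans (le_max_left _ _)
    _ ≤ max M 0 * R := by
      gcongr
      rw [← dist_eq_norm]; exact Metric.mem_closedBall'.1 (hR hzD)

theorem exists_dual_pos_le_apply_sub {s : Set X} {x : X} (hs : Convex ℝ s) (hsc : IsClosed s)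
    (hx : x ∉ s) : ∃ f : DualX X, ∃ δ > 0, ∀ z ∈ s, δ ≤ f (x - z) := by
  obtain ⟨f, u, hfs, hux⟩ := geometric_hahn_banach_closed_point hs hsc hx
  refine ⟨f, f x - u, sub_pos.2 hux, fun z hz => ?_⟩
  rw [map_sub]
  linarith [hfs z hz]

theorem statement1_general {X : Type*} [NormedAddCommGroup X] [NormedSpace ℝ X]
    (T : X → Set (DualX X)) (hmax : IsMaxMonotone T)
    (hbdd : IsBounded (OpDom T))
    (hconv : Convex ℝ (closure (OpDom T))) :
    ∀ x : X, x ∉ closure (OpDom T) →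
      ¬ BddAbove {r : ℝ | ∃ z z', z' ∈ T z ∧ r = z' (x - z) / ‖x - z‖} := by
  rintro x hx ⟨M, hM⟩
  obtain ⟨C, hC⟩ := exists_apply_sub_le_of_div_norm_le hbdd (fun h => hx (subset_closure h))
    fun z z' hz => hM ⟨z, z', hz, rfl⟩
  obtain ⟨f, δ, hδ, hf⟩ := exists_dual_pos_le_apply_sub hconv isClosed_closure hx
  -- For large `t`, `t f (x - z) ≥ t δ` beats `z' (x - z) ≤ C`, so `(x, t • f)` is monotonically
  -- related to `G(T)` and maximality would put `x` in `D_T`.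
  set t := max (C / δ) 0
  have htδ : C ≤ t * δ := (div_le_iff₀ hδ).1 (le_max_left _ _)
  refine hx (subset_closure ⟨t • f, hmax.mem_of_forall_nonneg fun z z' hz => ?_⟩)
  calc 0 ≤ t * δ - C := sub_nonneg.2 htδ
    _ ≤ t * f (x - z) - z' (x - z) := by
      gcongr
      · exact hf z (subset_closure ⟨z', hz⟩)
      · exact hC z z' hz
    _ = (t • f - z') (x - z) := by simp

/-- For a maximal monotone operator with bounded domain, convexity of
`cl D_T` implies Simons' condition (i). -/
theorem statement1 {X : Type*} [NormedAddCommGroup X] [NormedSpace ℝ X] [CompleteSpace X]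
    (T : X → Set (DualX X)) (hmax : IsMaxMonotone T)
    (hbdd : IsBounded (OpDom T))
    (hconv : Convex ℝ (closure (OpDom T))) :
    ∀ x : X, x ∉ closure (OpDom T) →
      ¬ BddAbove {r : ℝ | ∃ z z', z' ∈ T z ∧ r = z' (x - z) / ‖x - z‖} :=
  statement1_general T hmax hbdd hconv
end
end

section
/- Let X be a real Banach space and T : X ⇉ X* a monotone operator whose range R_T is bounded. Then the following three conditions are equivalent: (i) for every x* ∉ cl R_T one has sup{⟨x* − z*, z⟩/‖x* − z*‖ : (z,z*) ∈ G(T)} = ∞; (ii) π₂ dom φ_T ⊆ cl R_T; (iii) cl R_T = cl(co R_T) = cl(π₂ dom φ_T). Moreover, each of them implies (iv): cl R_T is convex. -/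
open Set Bornology
open scoped Pointwise

noncomputable section

variable {X : Type*} [NormedAddCommGroup X] [NormedSpace ℝ X]

/-
For `x* ∉ cl R_T` and `(z, z*) ∈ G(T)`, the norm `‖x* − z*‖` stays between a positive
constant (the distance from `x*` to `R_T`) and a finite one (`R_T` is bounded). Hence the
quotients `⟨x* − z*, z⟩ / ‖x* − z*‖` are bounded above iff the numerators `⟨x* − z*, z − x⟩`
are, for one (equivalently every) `x`, i.e. iff `x* ∈ π₂ dom φ_T`. So (i) says exactly that no
point outside `cl R_T` lies in `π₂ dom φ_T`, which is (ii). Since `π₂ dom φ_T` is convex and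
contains `R_T` by monotonicity, (ii) squeezes `co R_T` between `R_T` and `cl R_T`, giving (iii),
and (iii) makes `cl R_T` the closure of a convex set.
-/

lemma opRan_subset_fitzDom2 {T : X → Set (DualX X)} (hmono : IsMonotoneOp T) :
    OpRan T ⊆ FitzDom2 T := by
  rintro x' ⟨x, hx⟩
  refine ⟨x, 0, ?_⟩
  rintro r ⟨z, z', hz', rfl⟩
  have hneg : (x' - z') (z - x) = -((x' - z') (x - z)) := by
    rw [← map_neg, neg_sub]
  linarith [hmono hx hz']

lemma convex_fitzDom2 (T : X → Set (DualX X)) : Convex ℝ (FitzDom2 T) := by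
  rintro x'₁ ⟨x₁, M₁, hM₁⟩ x'₂ ⟨x₂, M₂, hM₂⟩ a b ha hb hab
  -- `⟨x* − z*, z − x⟩` is affine in `(x*, x)` for fixed `(z, z*)` up to the term `−⟨x*, x⟩`,
  -- whose failure to be affine along the combination is the constant `c`.
  set c := a * x'₁ x₁ + b * x'₂ x₂ - (a • x'₁ + b • x'₂) (a • x₁ + b • x₂)
  refine ⟨a • x₁ + b • x₂, a * M₁ + b * M₂ + c, ?_⟩
  rintro r ⟨z, z', hz', rfl⟩
  have hr₁ : (x'₁ - z') (z - x₁) ≤ M₁ := hM₁ ⟨z, z', hz', rfl⟩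
  have hr₂ : (x'₂ - z') (z - x₂) ≤ M₂ := hM₂ ⟨z, z', hz', rfl⟩
  have hsplit : ((a • x'₁ + b • x'₂) - z') (z - (a • x₁ + b • x₂)) =
      a * (x'₁ - z') (z - x₁) + b * (x'₂ - z') (z - x₂) + c := by
    simp only [c, sub_apply, add_apply, smul_apply, map_sub, map_add, map_smul, smul_eq_mul]
    linear_combination (z' z) * hab
  rw [hsplit]
  gcongr

lemma bddAbove_quotient_iff_mem_fitzDom2
    {T : X → Set (DualX X)} (hbdd : IsBounded (OpRan T)) {x' : DualX X}
    (hx' : x' ∉ closure (OpRan T)) :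
    BddAbove {r : ℝ | ∃ z z', z' ∈ T z ∧ r = (x' - z') z / ‖x' - z'‖} ↔ x' ∈ FitzDom2 T := by
  obtain ⟨ε, hε, hfar⟩ : ∃ ε > 0, ∀ z' ∈ OpRan T, ε ≤ ‖x' - z'‖ := by
    simpa [Metric.mem_closure_iff, dist_eq_norm] using hx'
  obtain ⟨R, hnear⟩ := hbdd.subset_closedBall x'
  have hle : ∀ z' ∈ OpRan T, ‖x' - z'‖ ≤ R := fun z' hz' => by
    simpa [dist_eq_norm, norm_sub_rev] using hnear hz'
  constructor
  · rintro ⟨M, hM⟩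
    refine ⟨0, R * max M 0, ?_⟩
    rintro r ⟨z, z', hz', rfl⟩
    have hpos : 0 < ‖x' - z'‖ := hε.trans_le (hfar z' ⟨z, hz'⟩)
    have hq : (x' - z') z / ‖x' - z'‖ ≤ max M 0 :=
      (hM ⟨z, z', hz', rfl⟩).trans (le_max_left _ _)
    calc (x' - z') (z - 0) = ‖x' - z'‖ * ((x' - z') z / ‖x' - z'‖) := by
          rw [sub_zero, mul_div_cancel₀ _ hpos.ne']
      _ ≤ ‖x' - z'‖ * max M 0 := by gcongr
      _ ≤ R * max M 0 := by gcongr; exact hle z' ⟨z, hz'⟩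
  · rintro ⟨x, M, hM⟩
    refine ⟨max (M + R * ‖x‖) 0 / ε, ?_⟩
    rintro r ⟨z, z', hz', rfl⟩
    have hz'R : z' ∈ OpRan T := ⟨z, hz'⟩
    have hnum : (x' - z') z ≤ max (M + R * ‖x‖) 0 := by
      have hshift : (x' - z') z = (x' - z') (z - x) + (x' - z') x := by
        rw [← map_add, sub_add_cancel]
      have hbase : (x' - z') x ≤ R * ‖x‖ :=
        calc (x' - z') x ≤ ‖x' - z'‖ * ‖x‖ := (le_abs_self _).trans ((x' - z').le_opNorm x)
          _ ≤ R * ‖x‖ := by gcongr; exact hle z' hz'R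
      have := hM ⟨z, z', hz', rfl⟩
      linarith [le_max_left (M + R * ‖x‖) 0]
    exact div_le_div₀ (le_max_right _ _) hnum hε (hfar z' hz'R)

theorem statement2_general {X : Type*} [NormedAddCommGroup X] [NormedSpace ℝ X]
    (T : X → Set (DualX X)) (hmono : IsMonotoneOp T)
    (hbdd : IsBounded (OpRan T)) :
    ((∀ x' : DualX X, x' ∉ closure (OpRan T) →
        ¬ BddAbove {r : ℝ | ∃ z z', z' ∈ T z ∧ r = (x' - z') z / ‖x' - z'‖}) ↔
      FitzDom2 T ⊆ closure (OpRan T)) ∧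
    ((FitzDom2 T ⊆ closure (OpRan T)) ↔
      (closure (OpRan T) = closure (convexHull ℝ (OpRan T)) ∧
        closure (OpRan T) = closure (FitzDom2 T))) ∧
    ((closure (OpRan T) = closure (convexHull ℝ (OpRan T)) ∧
        closure (OpRan T) = closure (FitzDom2 T)) →
      Convex ℝ (closure (OpRan T))) := by
  have hRF : OpRan T ⊆ FitzDom2 T := opRan_subset_fitzDom2 hmono
  have hcoF : convexHull ℝ (OpRan T) ⊆ FitzDom2 T := convexHull_min hRF (convex_fitzDom2 T)
  refine ⟨⟨fun h x' hF => ?_, fun h x' hx' hq => ?_⟩, ⟨fun h => ⟨?_, ?_⟩, ?_⟩, ?_⟩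
  · by_contra hx'
    exact h x' hx' ((bddAbove_quotient_iff_mem_fitzDom2 hbdd hx').2 hF)
  · exact hx' (h ((bddAbove_quotient_iff_mem_fitzDom2 hbdd hx').1 hq))
  · exact (closure_mono (subset_convexHull ℝ _)).antisymm
      (closure_minimal (hcoF.trans h) isClosed_closure)
  · exact (closure_mono hRF).antisymm (closure_minimal h isClosed_closure)
  · rintro ⟨-, hF⟩
    exact hF ▸ subset_closure
  · rintro ⟨hco, -⟩
    exact hco ▸ (convex_convexHull ℝ _).closure

/-- For a monotone operator with bounded range, the dual conditions
(i),(ii),(iii) are equivalent and each implies that `cl R_T` is convex. -/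
theorem statement2 {X : Type*} [NormedAddCommGroup X] [NormedSpace ℝ X] [CompleteSpace X]
    (T : X → Set (DualX X)) (hmono : IsMonotoneOp T)
    (hbdd : IsBounded (OpRan T)) :
    ((∀ x' : DualX X, x' ∉ closure (OpRan T) →
        ¬ BddAbove {r : ℝ | ∃ z z', z' ∈ T z ∧ r = (x' - z') z / ‖x' - z'‖}) ↔
      FitzDom2 T ⊆ closure (OpRan T)) ∧
    ((FitzDom2 T ⊆ closure (OpRan T)) ↔
      (closure (OpRan T) = closure (convexHull ℝ (OpRan T)) ∧
        closure (OpRan T) = closure (FitzDom2 T))) ∧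
    ((closure (OpRan T) = closure (convexHull ℝ (OpRan T)) ∧
        closure (OpRan T) = closure (FitzDom2 T)) →
      Convex ℝ (closure (OpRan T))) :=
  statement2_general T hmono hbdd
end
end

section
/- Let X be a real Banach space and T : X ⇉ X* a maximal monotone operator whose range R_T is bounded. If the weak*-closure of R_T is convex, then for every x* not belonging to the weak*-closure of R_T one has sup{⟨x* − z*, z⟩/‖x* − z*‖ : (z,z*) ∈ G(T)} = ∞. -/
open Set Bornology
open scoped Pointwise

noncomputable section

variable {X : Type*} [NormedAddCommGroup X] [NormedSpace ℝ X]

/-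
Separate `x*` from the weak*-closed convex set `cl* R_T` by a weak*-continuous functional, that
is, by evaluation at some `x ∈ X`; then `⟨x* - z*, x⟩ ≥ δ > 0` for all `z* ∈ R_T`. If the ratios
were bounded above, boundedness of `R_T` would give `⟨x* - z*, z⟩ ≤ K` on `G(T)`, so for
`t = |K| / δ` the pair `(t x, x*)` is monotonically related to `G(T)`. Maximality then puts `x*`
in `T (t x) ⊆ R_T`, a contradiction.
-/

instance WeakDual.instLocallyConvexSpace {E : Type*} [AddCommGroup E] [TopologicalSpace E]
    [Module ℝ E] : LocallyConvexSpace ℝ (WeakDual ℝ E) :=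
  WeakBilin.locallyConvexSpace

theorem WeakDual.exists_eq_apply {𝕜 E : Type*} [NontriviallyNormedField 𝕜] [AddCommGroup E]
    [TopologicalSpace E] [Module 𝕜 E] (f : StrongDual 𝕜 (WeakDual 𝕜 E)) :
    ∃ x : E, ∀ g : WeakDual 𝕜 E, f g = g x := by
  obtain ⟨x, rfl⟩ := LinearMap.dualEmbedding_surjective (topDualPairing 𝕜 E) f
  exact ⟨x, fun _ => rfl⟩

theorem subset_wStarClosure (A : Set (DualX X)) : A ⊆ WStarClosure A := fun z hz =>
  show StrongDual.toWeakDual z ∈ closure (StrongDual.toWeakDual '' A) from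
    subset_closure (mem_image_of_mem _ hz)

theorem exists_apply_lt_of_notMem_wStarClosure {A : Set (DualX X)}
    (hA : Convex ℝ (WStarClosure A)) {x' : DualX X} (hx' : x' ∉ WStarClosure A) :
    ∃ x : X, ∃ u : ℝ, (∀ z' ∈ A, z' x < u) ∧ u < x' x := by
  have hclosure : StrongDual.toWeakDual '' WStarClosure A =
      closure (StrongDual.toWeakDual '' A) :=
    image_preimage_eq _ StrongDual.toWeakDual.surjective
  have hconv : Convex ℝ (closure (StrongDual.toWeakDual '' A)) :=
    hclosure ▸ hA.linear_image StrongDual.toWeakDual.toLinearMap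
  obtain ⟨f, u, hA_lt, hlt_x'⟩ := geometric_hahn_banach_closed_point hconv isClosed_closure hx'
  obtain ⟨x, hx⟩ := WeakDual.exists_eq_apply f
  exact ⟨x, u, fun z' hz' => hx _ ▸ hA_lt _ (subset_closure (mem_image_of_mem _ hz')),
    hx _ ▸ hlt_x'⟩

theorem exists_apply_le_of_bddAbove_div_norm {T : X → Set (DualX X)} (hT : IsBounded (OpRan T))
    {x' : DualX X} (hK : BddAbove {r : ℝ | ∃ z z', z' ∈ T z ∧ r = (x' - z') z / ‖x' - z'‖}) :
    ∃ K : ℝ, ∀ z z', z' ∈ T z → (x' - z') z ≤ K := by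
  obtain ⟨K, hK⟩ := hK
  obtain ⟨M, hM⟩ := isBounded_iff_forall_norm_le.mp hT
  refine ⟨|K| * (‖x'‖ + M), fun z z' hz => ?_⟩
  have hratio : (x' - z') z ≤ |K| * ‖x' - z'‖ := by
    rcases eq_or_ne x' z' with rfl | hne
    · simp
    have hpos : 0 < ‖x' - z'‖ := norm_pos_iff.mpr (sub_ne_zero.mpr hne)
    calc (x' - z') z ≤ K * ‖x' - z'‖ := (div_le_iff₀ hpos).mp (hK ⟨z, z', hz, rfl⟩)
      _ ≤ |K| * ‖x' - z'‖ := by gcongr; exact le_abs_self K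
  have hnorm : ‖x' - z'‖ ≤ ‖x'‖ + M := (norm_sub_le x' z').trans (by gcongr; exact hM z' ⟨z, hz⟩)
  exact hratio.trans (by gcongr)

theorem statement4_general {X : Type*} [NormedAddCommGroup X] [NormedSpace ℝ X]
    (T : X → Set (DualX X)) (hmax : IsMaxMonotone T)
    (hbdd : IsBounded (OpRan T))
    (hconv : Convex ℝ (WStarClosure (OpRan T))) :
    ∀ x' : DualX X, x' ∉ WStarClosure (OpRan T) →
      ¬ BddAbove {r : ℝ | ∃ z z', z' ∈ T z ∧ r = (x' - z') z / ‖x' - z'‖} := by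
  intro x' hx' hratio
  obtain ⟨x, u, hsep, hux'⟩ := exists_apply_lt_of_notMem_wStarClosure hconv hx'
  obtain ⟨K, hK⟩ := exists_apply_le_of_bddAbove_div_norm hbdd hratio
  set δ := x' x - u
  have hδ : 0 < δ := sub_pos.mpr hux'
  set t := |K| / δ
  have hx'T : x' ∈ T (t • x) := hmax.mem_of_forall_nonneg fun z z' hz => by
    have hgap : δ ≤ (x' - z') x := by
      have := hsep z' ⟨z, hz⟩
      simp only [sub_apply]
      linarith
    have htδ : t * δ = |K| := div_mul_cancel₀ _ hδ.ne'
    calc 0 ≤ t * δ - K := by linarith [le_abs_self K]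
      _ ≤ t * (x' - z') x - (x' - z') z := by gcongr; exact hK z z' hz
      _ = (x' - z') (t • x - z) := by simp only [map_sub, map_smul, smul_eq_mul]
  exact hx' (subset_wStarClosure _ ⟨t • x, hx'T⟩)

/-- For a maximal monotone operator with bounded range, convexity of the
weak*-closure of `R_T` implies the dual Simons condition (i'). -/
theorem statement4 {X : Type*} [NormedAddCommGroup X] [NormedSpace ℝ X] [CompleteSpace X]
    (T : X → Set (DualX X)) (hmax : IsMaxMonotone T)
    (hbdd : IsBounded (OpRan T))
    (hconv : Convex ℝ (WStarClosure (OpRan T))) :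
    ∀ x' : DualX X, x' ∉ WStarClosure (OpRan T) →
      ¬ BddAbove {r : ℝ | ∃ z z', z' ∈ T z ∧ r = (x' - z') z / ‖x' - z'‖} :=
  statement4_general T hmax hbdd hconv
end
end

section
/- Let X be a real Banach space and D, C, K ⊆ X with cl D convex, C and K closed and convex, D ∩ int C ≠ ∅, and D ∩ C ∩ int K ≠ ∅. Then D ∩ int C ∩ int K ≠ ∅. -/
open Set Bornology
open scoped Pointwise

noncomputable section

variable {X : Type*} [NormedAddCommGroup X] [NormedSpace ℝ X]

open Filter Topology

theorem openSegment_inter_nonempty_of_mem_nhds_right {E : Type*} [AddCommGroup E] [Module ℝ E]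
    [TopologicalSpace E] [IsTopologicalAddGroup E] [ContinuousSMul ℝ E] (a : E) {b : E}
    {U : Set E} (hU : U ∈ 𝓝 b) : (openSegment ℝ a b ∩ U).Nonempty := by
  have hline : Tendsto (AffineMap.lineMap b a) (𝓝[>] (0 : ℝ)) (𝓝 b) := by
    have := (AffineMap.lineMap_continuous (R := ℝ) (p := b) (q := a)).continuousWithinAt
      (s := Ioi 0) (x := 0)
    rwa [ContinuousWithinAt, AffineMap.lineMap_apply_zero] at this
  obtain ⟨t, ht, htU⟩ :=
    Filter.nonempty_of_mem (inter_mem (Ioo_mem_nhdsGT (zero_lt_one' ℝ)) (hline hU))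
  refine ⟨AffineMap.lineMap b a t, ?_, htU⟩
  rw [openSegment_symm, openSegment_eq_image_lineMap]
  exact mem_image_of_mem _ ht

theorem statement12_general {X : Type*} [NormedAddCommGroup X] [NormedSpace ℝ X]
    (D C K : Set X) (hD : Convex ℝ (closure D))
    (hCconv : Convex ℝ C)
    (h1 : (D ∩ interior C).Nonempty) (h2 : (D ∩ C ∩ interior K).Nonempty) :
    (D ∩ interior C ∩ interior K).Nonempty := by
  obtain ⟨a, haD, haC⟩ := h1
  obtain ⟨b, ⟨hbD, hbC⟩, hbK⟩ := h2
  obtain ⟨x, hxab, hxK⟩ :=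
    openSegment_inter_nonempty_of_mem_nhds_right a (isOpen_interior.mem_nhds hbK)
  have hxC : x ∈ interior C := hCconv.openSegment_interior_self_subset_interior haC hbC hxab
  have hxD : x ∈ closure D :=
    hD.openSegment_subset (subset_closure haD) (subset_closure hbD) hxab
  have hx : (closure D ∩ (interior C ∩ interior K)).Nonempty := ⟨x, hxD, hxC, hxK⟩
  rw [closure_inter_open_nonempty_iff (isOpen_interior.inter isOpen_interior)] at hx
  simpa only [inter_assoc] using hx

/-- If `cl D` is convex, `C, K` are closed convex, `D ∩ int C ≠ ∅` and
`D ∩ C ∩ int K ≠ ∅`, then `D ∩ int C ∩ int K ≠ ∅`. -/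
theorem statement12 {X : Type*} [NormedAddCommGroup X] [NormedSpace ℝ X] [CompleteSpace X]
    (D C K : Set X) (hD : Convex ℝ (closure D))
    (hC : IsClosed C) (hCconv : Convex ℝ C)
    (hK : IsClosed K) (hKconv : Convex ℝ K)
    (h1 : (D ∩ interior C).Nonempty) (h2 : (D ∩ C ∩ interior K).Nonempty) :
    (D ∩ interior C ∩ interior K).Nonempty :=
  statement12_general D C K hD hCconv h1 h2
end
end

section
/- Let X be a real Banach space and T : X ⇉ X* a monotone operator such that cl D_T is convex. If C ∈ 𝒞₀(T) and K ∈ 𝒞₀(T + ∂I_C), then C ∩ K ∈ 𝒞₀(T). -/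
open Set Bornology
open scoped Pointwise

noncomputable section

variable {X : Type*} [NormedAddCommGroup X] [NormedSpace ℝ X]

/-! Take `y ∈ D_T ∩ int C` and `x ∈ D_{T+∂I_C} ∩ int K`, so that `x ∈ D_T ∩ C`. Points of the
open segment `]x, y[` close enough to `x` lie in `int K`, and all of them lie in `int C` and,
since `cl D_T` is convex, in `cl D_T`. Hence the open set `int C ∩ int K = int (C ∩ K)` meets
`cl D_T`, so it meets `D_T`. -/

open Topology

theorem opDom_opSum_indSubdiff_subset (T : X → Set (DualX X)) (C : Set X) :
    OpDom (OpSum T (IndSubdiff C)) ⊆ OpDom T ∩ C := by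
  rintro x ⟨_, t', ht', s', hs', -⟩
  exact ⟨⟨t', ht'⟩, hs'.1⟩

theorem exists_mem_nhds_inter_openSegment {E : Type*} [AddCommGroup E] [Module ℝ E]
    [TopologicalSpace E] [ContinuousAdd E] [ContinuousSMul ℝ E] {U : Set E} {x : E} (y : E)
    (hU : U ∈ 𝓝 x) : (U ∩ openSegment ℝ x y).Nonempty :=
  mem_closure_iff_nhds.1 (segment_subset_closure_openSegment (left_mem_segment ℝ x y)) U hU

theorem statement13_general {X : Type*} [NormedAddCommGroup X] [NormedSpace ℝ X]
    (T : X → Set (DualX X))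
    (hconv : Convex ℝ (closure (OpDom T)))
    (C K : Set X) (hC : C ∈ CZero T) (hK : K ∈ CZero (OpSum T (IndSubdiff C))) :
    C ∩ K ∈ CZero T := by
  obtain ⟨hCclosed, hCconv, y, hyT, hyC⟩ := hC
  obtain ⟨hKclosed, hKconv, x, hxS, hxK⟩ := hK
  obtain ⟨hxT, hxC⟩ := opDom_opSum_indSubdiff_subset T C hxS
  refine ⟨hCclosed.inter hKclosed, hCconv.inter hKconv, ?_⟩
  obtain ⟨z, hzK, hzxy⟩ := exists_mem_nhds_inter_openSegment y (isOpen_interior.mem_nhds hxK)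
  have hzC : z ∈ interior C :=
    hCconv.openSegment_closure_interior_subset_interior (subset_closure hxC) hyC hzxy
  have hzT : z ∈ closure (OpDom T) :=
    hconv.openSegment_subset (subset_closure hxT) (subset_closure hyT) hzxy
  rw [interior_inter]
  exact (closure_inter_open_nonempty_iff (isOpen_interior.inter isOpen_interior)).1
    ⟨z, hzT, hzC, hzK⟩

/-- If `T` is monotone with `cl D_T` convex, `C ∈ 𝒞₀(T)` and
`K ∈ 𝒞₀(T + ∂I_C)`, then `C ∩ K ∈ 𝒞₀(T)`. -/
theorem statement13 {X : Type*} [NormedAddCommGroup X] [NormedSpace ℝ X] [CompleteSpace X]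
    (T : X → Set (DualX X)) (hmono : IsMonotoneOp T)
    (hconv : Convex ℝ (closure (OpDom T)))
    (C K : Set X) (hC : C ∈ CZero T) (hK : K ∈ CZero (OpSum T (IndSubdiff C))) :
    C ∩ K ∈ CZero T :=
  statement13_general T hconv C K hC hK
end
end

section
/- Let X be a real Banach space and T : X ⇉ X* a maximal monotone operator with int D_T ≠ ∅. Then T is directionally inf bounded at every x ∈ int D_T. -/
open Set Bornology
open scoped Pointwise

noncomputable section

variable {X : Type*} [NormedAddCommGroup X] [NormedSpace ℝ X]

/-! A monotone operator is locally bounded on the interior of its domain: rescaling each graph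
element `(z, z*)` near `x` by `1 + ‖z*‖ ‖z - x‖` makes the family of functionals pointwise bounded
above near `0`, by monotonicity against a point of the domain, so the Banach–Steinhaus theorem
bounds it. Along a segment from `y` to a point `a` near `x`, monotonicity then shows that the
pairing of `z*` with `z - y` is at most that of some `a* ∈ T a`, which is at most `M ‖z - y‖`. -/

open Filter Topology

theorem ContinuousLinearMap.exists_norm_le_of_eventually_bddAbove {ι E : Type*}
    [NormedAddCommGroup E] [NormedSpace ℝ E] [CompleteSpace E] {g : ι → E →L[ℝ] ℝ}
    (h : ∀ᶠ v in 𝓝 0, BddAbove (range fun i => g i v)) : ∃ C, ∀ i, ‖g i‖ ≤ C := by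
  refine banach_steinhaus fun v => ?_
  have hv : Tendsto (fun c : ℝ => c • v) (𝓝 0) (𝓝 0) := by
    simpa using (tendsto_id (x := 𝓝 (0 : ℝ))).smul_const v
  have hnv : Tendsto (fun c : ℝ => -(c • v)) (𝓝 0) (𝓝 0) := by simpa using hv.neg
  obtain ⟨c, ⟨⟨C₁, hC₁⟩, ⟨C₂, hC₂⟩⟩, hc : 0 < c⟩ :=
    (((hv.eventually h).and (hnv.eventually h)).filter_mono nhdsWithin_le_nhds).and
      self_mem_nhdsWithin |>.exists (f := 𝓝[>] (0 : ℝ))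
  refine ⟨max C₁ C₂ / c, fun i => ?_⟩
  have h₁ : c * g i v ≤ C₁ := by simpa using hC₁ (mem_range_self i)
  have h₂ : -(c * g i v) ≤ C₂ := by simpa using hC₂ (mem_range_self i)
  rw [Real.norm_eq_abs, le_div_iff₀ hc]
  calc |g i v| * c = |c * g i v| := by rw [abs_mul, abs_of_pos hc, mul_comm]
    _ ≤ max C₁ C₂ := abs_le.2 ⟨by linarith [le_max_right C₁ C₂], by linarith [le_max_left C₁ C₂]⟩

theorem IsMonotoneOp.exists_eventually_norm_le [CompleteSpace X] {T : X → Set (DualX X)}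
    (hT : IsMonotoneOp T) {x : X} (hx : x ∈ interior (OpDom T)) :
    ∃ M > (0 : ℝ), ∀ᶠ z in 𝓝 x, ∀ z' ∈ T z, ‖z'‖ ≤ M := by
  obtain ⟨ρ, hρ, hball⟩ := Metric.mem_nhds_iff.1 (mem_interior_iff_mem_nhds.1 hx)
  let G : Set (X × DualX X) := {p | p.2 ∈ T p.1 ∧ ‖p.1 - x‖ < ρ}
  let w : G → ℝ := fun p => 1 + ‖p.1.2‖ * ‖p.1.1 - x‖
  have hw : ∀ p, 1 ≤ w p := fun p => le_add_of_nonneg_right (by positivity)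
  have hbdd : ∀ᶠ v in 𝓝 0, BddAbove (range fun p : G => ((w p)⁻¹ • p.1.2) v) := by
    filter_upwards [Metric.ball_mem_nhds 0 hρ] with v hv
    obtain ⟨y', hy'⟩ := hball (show x + v ∈ Metric.ball x ρ by simpa using hv)
    refine ⟨2 * ρ * ‖y'‖ + 1, ?_⟩
    rintro _ ⟨⟨⟨z, z'⟩, hz', hzx⟩, rfl⟩
    have hmon : z' (x + v - z) ≤ y' (x + v - z) := by
      simpa [sub_nonneg] using hT hy' hz'
    have hy'_le : y' (x + v - z) ≤ ‖y'‖ * (2 * ρ) := by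
      have : ‖x + v - z‖ ≤ 2 * ρ := by
        calc ‖x + v - z‖ = ‖v - (z - x)‖ := by congr 1; abel
          _ ≤ ‖v‖ + ‖z - x‖ := norm_sub_le _ _
          _ ≤ 2 * ρ := by rw [mem_ball_zero_iff] at hv; linarith
      exact (le_abs_self _).trans (y'.le_of_opNorm_le le_rfl _ |>.trans (by gcongr))
    have hz'_le : z' (z - x) ≤ ‖z'‖ * ‖z - x‖ := (le_abs_self _).trans (z'.le_opNorm _)
    have hsplit : z' v = z' (x + v - z) + z' (z - x) := by rw [← map_add]; congr 1; abel
    simp only [smul_apply, smul_eq_mul]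
    rw [inv_mul_le_iff₀ (by positivity)]
    simp only [w]
    nlinarith [mul_nonneg (mul_nonneg (norm_nonneg z') (norm_nonneg (z - x)))
      (mul_nonneg hρ.le (norm_nonneg y'))]
  obtain ⟨C, hC⟩ := ContinuousLinearMap.exists_norm_le_of_eventually_bddAbove hbdd
  set M := max C 1
  have hM : 0 < M := lt_max_of_lt_right one_pos
  refine ⟨2 * M, by positivity, ?_⟩
  filter_upwards [Metric.ball_mem_nhds x (lt_min hρ (by positivity : 0 < 1 / (2 * M)))]
    with z hz z' hz'
  rw [Metric.mem_ball, dist_eq_norm, lt_min_iff] at hz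
  have hwz := hw ⟨(z, z'), hz', hz.1⟩
  have := hC ⟨(z, z'), hz', hz.1⟩
  rw [norm_smul, norm_inv, Real.norm_of_nonneg (by positivity),
    inv_mul_le_iff₀ (by positivity)] at this
  -- `‖z'‖ ≤ M (1 + ‖z'‖ ‖z - x‖)` with `M ‖z - x‖ < 1/2` leaves `‖z'‖ ≤ 2 M`
  have hzM : ‖z - x‖ * M < 1 / 2 := by
    rw [lt_div_iff₀ (by positivity)] at hz; linarith [hz.2]
  simp only [w] at this hwz
  nlinarith [le_max_left C 1, norm_nonneg z', norm_nonneg (z - x)]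

theorem IsMonotoneOp.exists_apply_sub_le {T : X → Set (DualX X)} (hT : IsMonotoneOp T)
    {y a : X} {t : ℝ} (ht : t ∈ Icc (0 : ℝ) 1) (ha : a ∈ OpDom T) {z' : DualX X}
    (hz' : z' ∈ T ((1 - t) • y + t • a)) :
    ∃ a' ∈ T a, z' ((1 - t) • y + t • a - y) ≤ a' ((1 - t) • y + t • a - y) := by
  rcases ht.2.lt_or_eq with ht1 | rfl
  · obtain ⟨a', ha'⟩ := ha
    refine ⟨a', ha', ?_⟩
    have hmon := hT hz' ha'
    -- `z - y = t • (a - y)` and `z - a = (1 - t) • (y - a)` point in opposite directions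
    have hsub : (1 - t) • ((1 - t) • y + t • a - y) = -t • ((1 - t) • y + t • a - a) := by module
    have key := congrArg (z' - a') hsub
    simp only [map_smul, smul_eq_mul, sub_apply] at key hmon ⊢
    nlinarith [ht.1]
  · exact ⟨z', by simpa using hz', le_rfl⟩

theorem statement17_general {X : Type*} [NormedAddCommGroup X] [NormedSpace ℝ X] [CompleteSpace X]
    (T : X → Set (DualX X)) (hmax : IsMaxMonotone T) :
    ∀ x ∈ interior (OpDom T), DirInfBdd T x := by
  intro x hx y
  obtain ⟨M, hM, hbdd⟩ := hmax.1.exists_eventually_norm_le hx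
  obtain ⟨ε, hε, hball⟩ :=
    Metric.eventually_nhds_iff_ball.1 (hbdd.and (mem_interior_iff_mem_nhds.1 hx))
  refine ⟨ε, hε, M, hM, ?_⟩
  rintro _ ⟨⟨t, ht, a, ha, rfl⟩, z', hz'⟩
  obtain ⟨a', ha', hle⟩ := hmax.1.exists_apply_sub_le ht (hball a ha).2 hz'
  exact ⟨z', hz', hle.trans <| (le_abs_self _).trans <|
    a'.le_of_opNorm_le ((hball a ha).1 a' ha') _⟩

/-- A maximal monotone operator with `int D_T ≠ ∅` is directionally inf
bounded at every point of `int D_T`. -/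
theorem statement17 {X : Type*} [NormedAddCommGroup X] [NormedSpace ℝ X] [CompleteSpace X]
    (T : X → Set (DualX X)) (hmax : IsMaxMonotone T)
    (hint : (interior (OpDom T)).Nonempty) :
    ∀ x ∈ interior (OpDom T), DirInfBdd T x :=
  statement17_general T hmax
end
end
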